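/- arXiv:2010.10005 — 2 statements merged into one kernel-verified Lean document; each statement's English description precedes it below -/
import Mathlib

section
/- Let D ⊆ ℤ² be a digital disk and let S be a bounding curve of D. Then S is a freezing set for (D, c₁) and S is a freezing set for (D, c₂). -/
/-- Two points of `ℤ²` are `c_u`-adjacent: they are distinct, differ by at most 1 in each
coordinate, and differ in at most `u` coordinates. -/
def adj2 (u : ℕ) (x y : ℤ × ℤ) : Prop :=
  x ≠ y ∧ |x.1 - y.1| ≤ 1 ∧ |x.2 - y.2| ≤ 1 ∧
    ((if x.1 = y.1 then 0 else 1) + (if x.2 = y.2 then 0 else 1) : ℕ) ≤ u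

/-- `f` is `c_u`-continuous on `X ⊆ ℤ²`. -/
def DigContinuous2 (u : ℕ) (X : Set (ℤ × ℤ)) (f : ℤ × ℤ → ℤ × ℤ) : Prop :=
  ∀ x ∈ X, ∀ y ∈ X, adj2 u x y → f x = f y ∨ adj2 u (f x) (f y)

/-- `A` is a freezing set for `(X, c_u)`: every `c_u`-continuous self-map of `X`
fixing `A` pointwise is the identity on `X`. -/
def FreezingSet2 (u : ℕ) (X A : Set (ℤ × ℤ)) : Prop :=
  A ⊆ X ∧ ∀ f : ℤ × ℤ → ℤ × ℤ, Set.MapsTo f X X → DigContinuous2 u X f →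
    (∀ a ∈ A, f a = a) → ∀ x ∈ X, f x = x

/-- `A` is a minimal freezing set for `(X, c_u)`. -/
def MinFreezingSet2 (u : ℕ) (X A : Set (ℤ × ℤ)) : Prop :=
  FreezingSet2 u X A ∧ ∀ A' ⊂ A, ¬ FreezingSet2 u X A'

/-- `q` is a close `c_u`-neighbor of `p` in `X`. -/
def CloseNbr2 (u : ℕ) (X : Set (ℤ × ℤ)) (p q : ℤ × ℤ) : Prop :=
  p ∈ X ∧ q ∈ X ∧ p ≠ q ∧ ∀ x ∈ X, adj2 u x p → x = q ∨ adj2 u x q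

/-- A `c_u`-path of length `k` in `Y` from `a` to `b`. -/
def IsPathIn2 (u : ℕ) (Y : Set (ℤ × ℤ)) (k : ℕ) (s : Fin (k + 1) → ℤ × ℤ)
    (a b : ℤ × ℤ) : Prop :=
  (∀ i, s i ∈ Y) ∧ s 0 = a ∧ s (Fin.last k) = b ∧
    ∀ i : Fin k, s i.castSucc = s i.succ ∨ adj2 u (s i.castSucc) (s i.succ)

/-- `Y` is `c_u`-connected. -/
def ConnectedIn2 (u : ℕ) (Y : Set (ℤ × ℤ)) : Prop :=
  ∀ a ∈ Y, ∀ b ∈ Y, ∃ k s, IsPathIn2 u Y k s a b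

/-- `C` is a `c_u`-connected component of `Y`: a maximal `c_u`-connected subset. -/
def IsComponent2 (u : ℕ) (Y C : Set (ℤ × ℤ)) : Prop :=
  C ⊆ Y ∧ C.Nonempty ∧ ConnectedIn2 u C ∧
    ∀ C', C ⊆ C' → C' ⊆ Y → ConnectedIn2 u C' → C' = C

/-- `S` is a digital `c₂`-closed curve: the trace of an injective cyclic `c₂`-path. -/
def IsClosedCurve2 (S : Set (ℤ × ℤ)) : Prop :=
  ∃ m : ℕ, 0 < m ∧ ∃ s : ZMod m → ℤ × ℤ, Function.Injective s ∧ Set.range s = S ∧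
    ∀ i, s i = s (i + 1) ∨ adj2 2 (s i) (s (i + 1))

/-- `S` is a bounding curve of the digital disk `D`: `S` is a `c₂`-closed curve,
`ℤ² \ S` has exactly two `c₁`-components, one finite (the interior `I`) and one
infinite, and `D = S ∪ I`. -/
def IsBoundingCurve (S D : Set (ℤ × ℤ)) : Prop :=
  IsClosedCurve2 S ∧ ∃ I E : Set (ℤ × ℤ), I ≠ E ∧ I.Finite ∧ E.Infinite ∧
    {C | IsComponent2 1 Sᶜ C} = {I, E} ∧ D = S ∪ I

/-- A digital line segment: a `c₂`-connected set of two or more collinear points. -/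
def IsSegment2 (T : Set (ℤ × ℤ)) : Prop :=
  ConnectedIn2 2 T ∧ (∃ p ∈ T, ∃ q ∈ T, p ≠ q) ∧
    ∃ a b c : ℤ, ¬(a = 0 ∧ b = 0) ∧ ∀ p ∈ T, a * p.1 + b * p.2 = c

/-- A horizontal digital line segment. -/
def HorizSeg (T : Set (ℤ × ℤ)) : Prop := IsSegment2 T ∧ ∀ p ∈ T, ∀ q ∈ T, p.2 = q.2

/-- A vertical digital line segment. -/
def VertSeg (T : Set (ℤ × ℤ)) : Prop := IsSegment2 T ∧ ∀ p ∈ T, ∀ q ∈ T, p.1 = q.1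

/-- A slanted digital line segment (slope `1` or `-1`). -/
def SlantSeg (T : Set (ℤ × ℤ)) : Prop := IsSegment2 T ∧
  ((∀ p ∈ T, ∀ q ∈ T, p.1 - q.1 = p.2 - q.2) ∨ (∀ p ∈ T, ∀ q ∈ T, p.1 - q.1 = -(p.2 - q.2)))

/-- `T` is a maximal horizontal segment of the curve `S`. -/
def MaxHorizSegOf (S T : Set (ℤ × ℤ)) : Prop :=
  T ⊆ S ∧ HorizSeg T ∧ ∀ T', T ⊆ T' → T' ⊆ S → HorizSeg T' → T' = T

/-- `T` is a maximal vertical segment of the curve `S`. -/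
def MaxVertSegOf (S T : Set (ℤ × ℤ)) : Prop :=
  T ⊆ S ∧ VertSeg T ∧ ∀ T', T ⊆ T' → T' ⊆ S → VertSeg T' → T' = T

/-- `T` is a maximal slanted segment of the curve `S`. -/
def MaxSlantSegOf (S T : Set (ℤ × ℤ)) : Prop :=
  T ⊆ S ∧ SlantSeg T ∧ ∀ T', T ⊆ T' → T' ⊆ S → SlantSeg T' → T' = T

/-- `p` is an endpoint of the segment `T`: it has at most one `c₂`-neighbor in `T`. -/
def IsEndpointOf (T : Set (ℤ × ℤ)) (p : ℤ × ℤ) : Prop :=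
  p ∈ T ∧ {q ∈ T | adj2 2 p q}.Subsingleton

/-- The canonical embedding `ℤ² → ℝ²`. -/
def toR2 (p : ℤ × ℤ) : ℝ × ℝ := ((p.1 : ℝ), (p.2 : ℝ))

/-- `D` is digitally convex: `D = H ∩ ℤ²`, where `H` is the convex hull of `D` in `ℝ²`. -/
def DigitallyConvex (D : Set (ℤ × ℤ)) : Prop :=
  ∀ p : ℤ × ℤ, toR2 p ∈ convexHull ℝ (toR2 '' D) → p ∈ D

/-- A unit horizontal or vertical direction. -/
def isAxisDir (d : ℤ × ℤ) : Prop := (|d.1| = 1 ∧ d.2 = 0) ∨ (d.1 = 0 ∧ |d.2| = 1)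

/-- A unit diagonal direction. -/
def isDiagDir (d : ℤ × ℤ) : Prop := |d.1| = 1 ∧ |d.2| = 1

def dot2 (d e : ℤ × ℤ) : ℤ := d.1 * e.1 + d.2 * e.2

/-- `e` is a king-move direction lying strictly inside the angle (of measure less than
180°) with side directions `d₁` and `d₂`. -/
def InSector (d₁ d₂ e : ℤ × ℤ) : Prop :=
  (isAxisDir e ∨ isDiagDir e) ∧ 0 ≤ dot2 e d₁ ∧ 0 ≤ dot2 e d₂ ∧ e ≠ d₁ ∧ e ≠ d₂

/-- `c` lies strictly on the same side of the line through `T` as some point of `I`. -/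
def InteriorSideOf (T I : Set (ℤ × ℤ)) (c : ℤ × ℤ) : Prop :=
  ∃ a b k : ℤ, (∀ q ∈ T, a * q.1 + b * q.2 = k) ∧ k < a * c.1 + b * c.2 ∧
    ∃ w ∈ I, k < a * w.1 + b * w.2

/-- `X` is thick with respect to its bounding curve `S` (whose interior is `X \ S`):
(i) every non-endpoint `p` of a maximal slanted segment of `S` has a point `c ∈ X`,
`c₂`- but not `c₁`-adjacent to `p`, on the interior side of the segment;
(ii) every vertex of a 90° interior angle of `S` with horizontal and vertical sides has
a point of the interior `c₂`- but not `c₁`-adjacent to it, and every vertex of a 90°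
interior angle with slanted sides has a point of the interior `c₁`-adjacent to it;
(iii) every vertex `p` of a 135° interior angle of `S` has points `b, b' ∈ X` inside the
angle with `b` `c₂`- but not `c₁`-adjacent to `p` and `b'` `c₁`-adjacent to `p`.
A vertex with side directions `d₁, d₂` has an interior angle (of measure < 180°)
when some king direction strictly inside the angle leads into `X`. -/
def ThickWRT (X S : Set (ℤ × ℤ)) : Prop :=
  (∀ T, MaxSlantSegOf S T → ∀ p ∈ T, ¬IsEndpointOf T p →
      ∃ c ∈ X, adj2 2 c p ∧ ¬adj2 1 c p ∧ InteriorSideOf T (X \ S) c) ∧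
  ∃ m : ℕ, 0 < m ∧ ∃ s : ZMod m → ℤ × ℤ, Function.Injective s ∧ Set.range s = S ∧
    (∀ i, s i = s (i + 1) ∨ adj2 2 (s i) (s (i + 1))) ∧
    ∀ i : ZMod m,
      (isAxisDir (s (i - 1) - s i) ∧ isAxisDir (s (i + 1) - s i) ∧
          dot2 (s (i - 1) - s i) (s (i + 1) - s i) = 0 ∧
          (∃ e, InSector (s (i - 1) - s i) (s (i + 1) - s i) e ∧ s i + e ∈ X) →
        ∃ q ∈ X \ S, adj2 2 q (s i) ∧ ¬adj2 1 q (s i)) ∧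
      (isDiagDir (s (i - 1) - s i) ∧ isDiagDir (s (i + 1) - s i) ∧
          dot2 (s (i - 1) - s i) (s (i + 1) - s i) = 0 ∧
          (∃ e, InSector (s (i - 1) - s i) (s (i + 1) - s i) e ∧ s i + e ∈ X) →
        ∃ q ∈ X \ S, adj2 1 q (s i)) ∧
      (((isAxisDir (s (i - 1) - s i) ∧ isDiagDir (s (i + 1) - s i)) ∨
          (isDiagDir (s (i - 1) - s i) ∧ isAxisDir (s (i + 1) - s i))) ∧
          dot2 (s (i - 1) - s i) (s (i + 1) - s i) = -1 ∧
          (∃ e, InSector (s (i - 1) - s i) (s (i + 1) - s i) e ∧ s i + e ∈ X) →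
        ∃ b b' : ℤ × ℤ, InSector (s (i - 1) - s i) (s (i + 1) - s i) b ∧
          InSector (s (i - 1) - s i) (s (i + 1) - s i) b' ∧
          s i + b ∈ X ∧ s i + b' ∈ X ∧
          adj2 2 (s i + b) (s i) ∧ ¬adj2 1 (s i + b) (s i) ∧ adj2 1 (s i + b') (s i))

/-! Every interior point `x` lies on a horizontal and on a vertical run of interior points
whose two ends lie on `S`, because the interior is finite and a `c₁`-neighbour of the
interior outside `S` is itself interior. A `c_u`-continuous map moves each coordinate by at
most one per step along such a run, so if it fixes both ends it must fix every coordinate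
along the run; in particular it fixes the relevant coordinate of `x`. -/

lemma adj2.symm {u : ℕ} {x y : ℤ × ℤ} (h : adj2 u x y) : adj2 u y x := by
  obtain ⟨hne, h1, h2, hu⟩ := h
  refine ⟨hne.symm, by rwa [abs_sub_comm], by rwa [abs_sub_comm], ?_⟩
  simpa only [eq_comm] using hu

lemma adj2.mono {u v : ℕ} {x y : ℤ × ℤ} (h : adj2 u x y) (huv : u ≤ v) : adj2 v x y :=
  ⟨h.1, h.2.1, h.2.2.1, h.2.2.2.trans huv⟩

lemma adj2_one_horiz (i j : ℤ) : adj2 1 (i, j) (i + 1, j) := by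
  simp [adj2]

lemma adj2_one_vert (i j : ℤ) : adj2 1 (i, j) (i, j + 1) := by
  simp [adj2]

def PathStep2 (u : ℕ) (Y : Set (ℤ × ℤ)) (p q : ℤ × ℤ) : Prop :=
  p ∈ Y ∧ q ∈ Y ∧ (p = q ∨ adj2 u p q)

lemma IsPathIn2.reflTransGen {u : ℕ} {Y : Set (ℤ × ℤ)} {k : ℕ} {s : Fin (k + 1) → ℤ × ℤ}
    {a b : ℤ × ℤ} (h : IsPathIn2 u Y k s a b) : Relation.ReflTransGen (PathStep2 u Y) a b := by
  obtain ⟨hmem, rfl, rfl, hstep⟩ := h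
  suffices ∀ i, Relation.ReflTransGen (PathStep2 u Y) (s 0) (s i) from this _
  intro i
  induction i using Fin.induction with
  | zero => rfl
  | succ i ih => exact ih.tail ⟨hmem i.castSucc, hmem i.succ, hstep i⟩

lemma exists_isPathIn2_of_reflTransGen {u : ℕ} {Y : Set (ℤ × ℤ)} {a b : ℤ × ℤ} (ha : a ∈ Y)
    (h : Relation.ReflTransGen (PathStep2 u Y) a b) : ∃ k s, IsPathIn2 u Y k s a b := by
  induction h with
  | refl => exact ⟨0, fun _ => a, fun _ => ha, rfl, rfl, fun i => i.elim0⟩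
  | @tail b c _ hbc ih =>
    obtain ⟨k, s, hmem, h0, hl, hstep⟩ := ih
    refine ⟨k + 1, Fin.snoc s c, fun i => ?_, ?_, Fin.snoc_last _ _, fun i => ?_⟩
    · induction i using Fin.lastCases with
      | last => simpa only [Fin.snoc_last] using hbc.2.1
      | cast i => simpa only [Fin.snoc_castSucc] using hmem i
    · simpa only [← Fin.castSucc_zero, Fin.snoc_castSucc] using h0
    · induction i using Fin.lastCases with
      | last => simpa only [Fin.succ_last, Fin.snoc_castSucc, Fin.snoc_last, hl] using hbc.2.2
      | cast j => simpa only [Fin.succ_castSucc, Fin.snoc_castSucc] using hstep j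

lemma connectedIn2_iff_reflTransGen {u : ℕ} {Y : Set (ℤ × ℤ)} :
    ConnectedIn2 u Y ↔ ∀ a ∈ Y, ∀ b ∈ Y, Relation.ReflTransGen (PathStep2 u Y) a b := by
  refine ⟨fun h a ha b hb => ?_, fun h a ha b hb => ?_⟩
  · obtain ⟨k, s, hs⟩ := h a ha b hb
    exact hs.reflTransGen
  · exact exists_isPathIn2_of_reflTransGen ha (h a ha b hb)

lemma ConnectedIn2.insert_of_adj2 {u : ℕ} {C : Set (ℤ × ℤ)} (hC : ConnectedIn2 u C) {y z : ℤ × ℤ}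
    (hz : z ∈ C) (hyz : adj2 u y z) : ConnectedIn2 u (insert y C) := by
  rw [connectedIn2_iff_reflTransGen] at hC ⊢
  have lift : PathStep2 u C ≤ PathStep2 u (insert y C) :=
    fun _ _ ⟨ha, hb, hab⟩ => ⟨Or.inr ha, Or.inr hb, hab⟩
  have to_y : ∀ a ∈ insert y C, Relation.ReflTransGen (PathStep2 u (insert y C)) a y := by
    rintro a (rfl | ha)
    · rfl
    · exact (Relation.ReflTransGen.mono lift _ _ (hC a ha z hz)).tail
        ⟨Or.inr hz, Or.inl rfl, Or.inr hyz.symm⟩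
  have from_y : ∀ b ∈ insert y C, Relation.ReflTransGen (PathStep2 u (insert y C)) y b := by
    rintro b (rfl | hb)
    · rfl
    · exact .head ⟨Or.inl rfl, Or.inr hz, Or.inr hyz⟩
        (Relation.ReflTransGen.mono lift _ _ (hC z hz b hb))
  exact fun a ha b hb => (to_y a ha).trans (from_y b hb)

lemma IsComponent2.mem_of_adj2 {u : ℕ} {Y C : Set (ℤ × ℤ)} (hC : IsComponent2 u Y C)
    {y z : ℤ × ℤ} (hy : y ∈ Y) (hz : z ∈ C) (hyz : adj2 u y z) : y ∈ C := by
  obtain ⟨hCY, -, hconn, hmax⟩ := hC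
  rw [← hmax _ (Set.subset_insert y C) (Set.insert_subset hy hCY) (hconn.insert_of_adj2 hz hyz)]
  exact Set.mem_insert y C

lemma IsComponent2.exists_gt_mem_of_finite {S I : Set (ℤ × ℤ)} (hI : IsComponent2 1 Sᶜ I)
    (hfin : I.Finite) {ℓ : ℤ → ℤ × ℤ} (hinj : Function.Injective ℓ)
    (hadj : ∀ i, adj2 1 (ℓ i) (ℓ (i + 1))) {i₀ : ℤ} (h₀ : ℓ i₀ ∈ I) :
    ∃ b, i₀ < b ∧ ℓ b ∈ S ∧ ∀ i ∈ Set.Ico i₀ b, ℓ i ∈ I := by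
  have hleave : ∃ b, i₀ < b ∧ ℓ b ∉ I := by
    by_contra! hstay
    refine ((Set.Ioi_infinite i₀).image hinj.injOn).mono ?_ hfin
    rintro _ ⟨i, hi, rfl⟩
    exact hstay i hi
  obtain ⟨b, ⟨hb, hbI⟩, hmin⟩ :=
    Int.exists_least_of_bdd ⟨i₀, fun _ h => h.1.le⟩ hleave
  have hbefore : ∀ i ∈ Set.Ico i₀ b, ℓ i ∈ I := by
    rintro i ⟨hi₀, hib⟩
    rcases hi₀.eq_or_lt with rfl | hi₀
    · exact h₀
    · by_contra hi
      exact (hmin i ⟨hi₀, hi⟩).not_gt hib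
  refine ⟨b, hb, ?_, hbefore⟩
  by_contra hbS
  have hprev := hbefore (b - 1) ⟨by omega, by omega⟩
  exact hbI (hI.mem_of_adj2 hbS hprev (by simpa using (hadj (b - 1)).symm))

lemma IsComponent2.exists_lt_lt_mem_of_finite {S I : Set (ℤ × ℤ)} (hI : IsComponent2 1 Sᶜ I)
    (hfin : I.Finite) {ℓ : ℤ → ℤ × ℤ} (hinj : Function.Injective ℓ)
    (hadj : ∀ i, adj2 1 (ℓ i) (ℓ (i + 1))) {i₀ : ℤ} (h₀ : ℓ i₀ ∈ I) :
    ∃ a b, a < i₀ ∧ i₀ < b ∧ ℓ a ∈ S ∧ ℓ b ∈ S ∧ ∀ i ∈ Set.Ioo a b, ℓ i ∈ I := by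
  obtain ⟨b, hb, hbS, hbI⟩ := hI.exists_gt_mem_of_finite hfin hinj hadj h₀
  obtain ⟨a, ha, haS, haI⟩ := hI.exists_gt_mem_of_finite hfin (ℓ := fun i => ℓ (-i))
    (hinj.comp neg_injective)
    (fun i => by simpa only [neg_add', sub_add_cancel] using (hadj (-i - 1)).symm)
    (i₀ := -i₀) (by simpa using h₀)
  refine ⟨-a, b, by omega, hb, haS, hbS, fun i ⟨hai, hib⟩ => ?_⟩
  rcases le_or_gt i₀ i with hi | hi
  · exact hbI i ⟨hi, hib⟩
  · simpa using haI (-i) ⟨by omega, by omega⟩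

lemma eq_self_of_abs_step_le_one {g : ℤ → ℤ} {a b : ℤ}
    (hstep : ∀ i ∈ Set.Ico a b, |g (i + 1) - g i| ≤ 1) (ha : g a = a) (hb : g b = b)
    {i : ℤ} (hi : i ∈ Set.Icc a b) : g i = i := by
  have hdist : ∀ i j, a ≤ i → i ≤ j → j ≤ b → |g j - g i| ≤ j - i := by
    intro i j hai hij
    induction j, hij using Int.leInduction with
    | base => simp
    | succ j hij ih =>
      intro hjb
      have h₁ := hstep j ⟨by omega, by omega⟩
      have h₂ := abs_sub_le (g (j + 1)) (g j) (g i)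
      linarith [ih (by omega)]
  have h₁ := abs_le.mp (hdist a i le_rfl hi.1 hi.2)
  have h₂ := abs_le.mp (hdist i b hi.1 hi.2 le_rfl)
  omega

lemma DigContinuous2.coord_apply_eq {u : ℕ} {X : Set (ℤ × ℤ)} {f : ℤ × ℤ → ℤ × ℤ}
    (hf : DigContinuous2 u X f) {ℓ : ℤ → ℤ × ℤ} {π : ℤ × ℤ → ℤ} (hπℓ : ∀ i, π (ℓ i) = i)
    (hπ : ∀ p q, adj2 u p q → |π p - π q| ≤ 1) (hadj : ∀ i, adj2 u (ℓ i) (ℓ (i + 1)))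
    {a b : ℤ} (hX : ∀ i ∈ Set.Icc a b, ℓ i ∈ X) (ha : f (ℓ a) = ℓ a) (hb : f (ℓ b) = ℓ b)
    {i : ℤ} (hi : i ∈ Set.Icc a b) : π (f (ℓ i)) = i := by
  refine eq_self_of_abs_step_le_one (g := fun i => π (f (ℓ i))) (fun j hj => ?_)
    (by simp only [ha, hπℓ]) (by simp only [hb, hπℓ]) hi
  rcases hf _ (hX j ⟨hj.1, hj.2.le⟩) _ (hX (j + 1) ⟨by linarith [hj.1], hj.2⟩) (hadj j)
    with heq | hadj'
  · simp [heq]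
  · rw [abs_sub_comm]
    exact hπ _ _ hadj'

lemma IsComponent2.coord_apply_eq {u : ℕ} (hu : 1 ≤ u) {S I : Set (ℤ × ℤ)}
    (hI : IsComponent2 1 Sᶜ I) (hfin : I.Finite) {f : ℤ × ℤ → ℤ × ℤ}
    (hf : DigContinuous2 u (S ∪ I) f) (hfix : ∀ a ∈ S, f a = a)
    {ℓ : ℤ → ℤ × ℤ} {π : ℤ × ℤ → ℤ} (hπℓ : ∀ i, π (ℓ i) = i)
    (hπ : ∀ p q, adj2 u p q → |π p - π q| ≤ 1) (hadj : ∀ i, adj2 1 (ℓ i) (ℓ (i + 1)))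
    {i₀ : ℤ} (h₀ : ℓ i₀ ∈ I) : π (f (ℓ i₀)) = i₀ := by
  obtain ⟨a, b, hai, hib, haS, hbS, hI'⟩ :=
    hI.exists_lt_lt_mem_of_finite hfin (Function.LeftInverse.injective hπℓ) hadj h₀
  refine hf.coord_apply_eq hπℓ hπ (fun i => (hadj i).mono hu) (fun i hi => ?_)
    (hfix _ haS) (hfix _ hbS) ⟨hai.le, hib.le⟩
  rcases hi.1.eq_or_lt with rfl | hai'
  · exact Or.inl haS
  rcases hi.2.eq_or_lt with rfl | hib'
  · exact Or.inl hbS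
  exact Or.inr (hI' i ⟨hai', hib'⟩)

lemma freezingSet2_union_of_isComponent2 {u : ℕ} (hu : 1 ≤ u) {S I : Set (ℤ × ℤ)}
    (hI : IsComponent2 1 Sᶜ I) (hfin : I.Finite) : FreezingSet2 u (S ∪ I) S := by
  refine ⟨Set.subset_union_left, fun f _ hf hfix x hx => ?_⟩
  rcases hx with hxS | hxI
  · exact hfix x hxS
  ext
  · exact hI.coord_apply_eq hu hfin hf hfix (ℓ := fun i => (i, x.2))
      (π := Prod.fst) (fun _ => rfl) (fun _ _ h => h.2.1) (fun i => adj2_one_horiz i x.2) hxI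
  · exact hI.coord_apply_eq hu hfin hf hfix (ℓ := fun j => (x.1, j))
      (π := Prod.snd) (fun _ => rfl) (fun _ _ h => h.2.2.1) (fun j => adj2_one_vert x.1 j) hxI

/-- If `D ⊆ ℤ²` is a digital disk with bounding curve `S`, then `S` is a freezing set
for `(D, c₁)` and for `(D, c₂)`. -/
theorem bounding_curve_freezes (D S : Set (ℤ × ℤ)) (h : IsBoundingCurve S D) :
    FreezingSet2 1 D S ∧ FreezingSet2 2 D S := by
  obtain ⟨-, I, E, -, hfin, -, hcomp, rfl⟩ := h
  have hI : IsComponent2 1 Sᶜ I := by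
    have hmem : I ∈ ({I, E} : Set (Set (ℤ × ℤ))) := Set.mem_insert I {E}
    rwa [← hcomp] at hmem
  exact ⟨freezingSet2_union_of_isComponent2 le_rfl hI hfin,
    freezingSet2_union_of_isComponent2 one_le_two hI hfin⟩
end

section
/- Every digital line segment in ℤ² is horizontal, vertical, or slanted; that is, if S is a c₂-connected set of two or more collinear points of ℤ², then the line through the points of S is horizontal, vertical, or has slope 1 or −1. -/
/-- Every digital line segment is horizontal, vertical, or slanted: if `S ⊆ ℤ²` is a
`c₂`-connected set of two or more collinear points, then the line through the points of
`S` is horizontal, vertical, or has slope `1` or `-1`. -/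
theorem segment_slopes (S : Set (ℤ × ℤ)) (hconn : ConnectedIn2 2 S)
    (htwo : ∃ p ∈ S, ∃ q ∈ S, p ≠ q)
    (hcol : ∃ a b c : ℤ, ¬(a = 0 ∧ b = 0) ∧ ∀ p ∈ S, a * p.1 + b * p.2 = c) :
    (∀ p ∈ S, ∀ q ∈ S, p.2 = q.2) ∨ (∀ p ∈ S, ∀ q ∈ S, p.1 = q.1) ∨
      (∀ p ∈ S, ∀ q ∈ S, p.1 - q.1 = p.2 - q.2) ∨
      (∀ p ∈ S, ∀ q ∈ S, p.1 - q.1 = -(p.2 - q.2)) := by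
  obtain ⟨a, b, c, hab, hline⟩ := hcol
  obtain ⟨p, hp, q, hq, hpq⟩ := htwo
  obtain ⟨k, s, hmem, h0, hlast, hstep⟩ := hconn p hp q hq
  by_cases hall : ∀ i : Fin k, s i.castSucc = s i.succ
  · exfalso
    apply hpq
    have key : ∀ n : Fin (k + 1), s 0 = s n := by
      intro n
      induction n using Fin.induction with
      | zero => rfl
      | succ i ih => rw [ih, hall i]
    rw [← h0, ← hlast]
    exact key (Fin.last k)
  · push_neg at hall
    obtain ⟨i, hi⟩ := hall
    have hadj := (hstep i).resolve_left hi
    obtain ⟨hne, hd1, hd2, _⟩ := hadj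
    set u := s i.castSucc with hu
    set v := s i.succ with hv
    have huS : u ∈ S := hmem _
    have hvS : v ∈ S := hmem _
    have h1 : a * u.1 + b * u.2 = c := hline u huS
    have h2 : a * v.1 + b * v.2 = c := hline v hvS
    have hzero : a * (u.1 - v.1) + b * (u.2 - v.2) = 0 := by ring_nf; linarith
    have hneq : u.1 ≠ v.1 ∨ u.2 ≠ v.2 := by
      by_contra h
      push_neg at h
      exact hne (Prod.ext h.1 h.2)
    rw [abs_le] at hd1 hd2
    have hneq' : u.1 ≠ v.1 ∨ u.2 ≠ v.2 := hneq
    by_cases hx : u.1 = v.1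
    · -- vertical step: b = 0, all first coordinates equal
      have e1 : u.1 - v.1 = 0 := by omega
      have hd2' : u.2 - v.2 = 1 ∨ u.2 - v.2 = -1 := by
        rcases hneq' with h | h
        · exact absurd hx h
        · omega
      have hb : b = 0 := by rcases hd2' with h | h <;> rw [e1, h] at hzero <;> omega
      have ha : a ≠ 0 := fun h0 => hab ⟨h0, hb⟩
      refine Or.inr (Or.inl ?_)
      intro r hr t ht
      have hr' := hline r hr
      have ht' := hline t ht
      rw [hb] at hr' ht'
      simp only [zero_mul, add_zero] at hr' ht'
      exact mul_left_cancel₀ ha (hr'.trans ht'.symm)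
    · by_cases hy : u.2 = v.2
      · -- horizontal step: a = 0, all second coordinates equal
        have e2 : u.2 - v.2 = 0 := by omega
        have hd1' : u.1 - v.1 = 1 ∨ u.1 - v.1 = -1 := by omega
        have ha : a = 0 := by rcases hd1' with h | h <;> rw [e2, h] at hzero <;> omega
        have hb : b ≠ 0 := fun h0 => hab ⟨ha, h0⟩
        refine Or.inl ?_
        intro r hr t ht
        have hr' := hline r hr
        have ht' := hline t ht
        rw [ha] at hr' ht'
        simp only [zero_mul, zero_add] at hr' ht'
        exact mul_left_cancel₀ hb (hr'.trans ht'.symm)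
      · -- diagonal step
        have hd1' : u.1 - v.1 = 1 ∨ u.1 - v.1 = -1 := by omega
        have hd2' : u.2 - v.2 = 1 ∨ u.2 - v.2 = -1 := by omega
        by_cases hsame : u.1 - v.1 = u.2 - v.2
        · -- slope 1 : a + b = 0
          have hsum : b = -a := by
            rcases hd1' with h | h <;>
              · have h2' : u.2 - v.2 = u.1 - v.1 := hsame.symm
                rw [h] at hzero hsame
                rw [← hsame] at hzero
                omega
          have ha : a ≠ 0 := fun h0 => hab ⟨h0, by omega⟩
          refine Or.inr (Or.inr (Or.inl ?_))
          intro r hr t ht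
          have hr' := hline r hr
          have ht' := hline t ht
          rw [hsum] at hr' ht'
          have : a * (r.1 - t.1) = a * (r.2 - t.2) := by linear_combination hr' - ht'
          exact mul_left_cancel₀ ha this
        · -- slope -1 : a = b
          have hanti : u.2 - v.2 = -(u.1 - v.1) := by omega
          have hsum : b = a := by
            rcases hd1' with h | h <;> rw [h] at hzero hanti <;> rw [hanti] at hzero <;>
              omega
          have ha : a ≠ 0 := fun h0 => hab ⟨h0, by omega⟩
          refine Or.inr (Or.inr (Or.inr ?_))
          intro r hr t ht
          have hr' := hline r hr
          have ht' := hline t ht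
          rw [hsum] at hr' ht'
          have : a * (r.1 - t.1) = a * (-(r.2 - t.2)) := by linear_combination hr' - ht'
          exact mul_left_cancel₀ ha this
end
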